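/- arXiv:1702.01449 — 10 statements merged into one kernel-verified Lean document; each statement's English description precedes it below -/
import Mathlib

section
/- In a two-dimensional normed space X with determinant form [·,·] and anti-norm ‖x‖ₐ = sup{|[x,y]| : ‖y‖ = 1}, the supremum defining ‖x‖ₐ is attained at a unit vector y if and only if y is Birkhoff orthogonal to x (i.e., ‖y‖ ≤ ‖y + t·x‖ for all t ∈ ℝ). -/
private lemma decomp2 {X : Type*} [NormedAddCommGroup X] [NormedSpace ℝ X]
    (hdim : Module.finrank ℝ X = 2) {u v : X} (h : LinearIndependent ℝ ![u, v]) (z : X) :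
    ∃ a b : ℝ, z = a • u + b • v := by
  have hcard : Fintype.card (Fin 2) = Module.finrank ℝ X := by simp [hdim]
  let B := basisOfLinearIndependentOfCardEqFinrank h hcard
  have hB : ⇑B = ![u, v] := coe_basisOfLinearIndependentOfCardEqFinrank h hcard
  refine ⟨B.repr z 0, B.repr z 1, ?_⟩
  have h2 := B.sum_repr z
  rw [Fin.sum_univ_two] at h2
  rw [show B 0 = u by rw [hB]; rfl, show B 1 = v by rw [hB]; rfl] at h2
  exact h2.symm

/-- In a 2-dimensional normed space with determinant form ω and
anti-norm ‖x‖ₐ = sup{|ω x y| : ‖y‖=1}, the supremum is attained at a unit vector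
y iff y is Birkhoff orthogonal to x. -/
theorem stmt_3 {X : Type*} [NormedAddCommGroup X] [NormedSpace ℝ X]
    (hdim : Module.finrank ℝ X = 2)
    (ω : X →ₗ[ℝ] X →ₗ[ℝ] ℝ) (halt : ∀ x : X, ω x x = 0) (hne : ω ≠ 0)
    (x y : X) (hy : ‖y‖ = 1) :
    |ω x y| = sSup {r : ℝ | ∃ z : X, ‖z‖ = 1 ∧ r = |ω x z|} ↔
      ∀ t : ℝ, ‖y‖ ≤ ‖y + t • x‖ := by
  have hfd : FiniteDimensional ℝ X := FiniteDimensional.of_finrank_eq_succ hdim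
  by_cases hx : x = 0
  · subst hx
    have hset : {r : ℝ | ∃ z : X, ‖z‖ = 1 ∧ r = |ω 0 z|} = {0} := by
      ext r
      simp only [Set.mem_setOf_eq, Set.mem_singleton_iff, map_zero,
        LinearMap.zero_apply, abs_zero]
      constructor
      · rintro ⟨z, _, rfl⟩; rfl
      · rintro rfl; exact ⟨y, hy, rfl⟩
    rw [hset, csSup_singleton]
    simp
  -- x ≠ 0
  have skew : ∀ u v : X, ω u v = -ω v u := by
    intro u v
    have h := halt (u + v)
    simp only [map_add, LinearMap.add_apply, halt] at h
    linarith
  obtain ⟨u, v, huv⟩ : ∃ u v : X, ω u v ≠ 0 := by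
    by_contra h
    push_neg at h
    exact hne (by ext u v; simp [h])
  have hindep : LinearIndependent ℝ ![u, v] := by
    rw [LinearIndependent.pair_iff]
    intro s t hst
    have h1 : ω (s • u + t • v) v = 0 := by rw [hst]; simp
    have h2 : ω u (s • u + t • v) = 0 := by rw [hst]; simp
    simp only [map_add, map_smul, LinearMap.add_apply, LinearMap.smul_apply,
      smul_eq_mul, halt] at h1 h2
    constructor
    · have : s * ω u v = 0 := by linarith
      exact (mul_eq_zero.1 this).resolve_right huv
    · have : t * ω u v = 0 := by linarith
      exact (mul_eq_zero.1 this).resolve_right huv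
  -- nondegeneracy: ω x ≠ 0 at some vector
  obtain ⟨w, hw⟩ : ∃ w : X, ω x w ≠ 0 := by
    obtain ⟨a, b, hab⟩ := decomp2 hdim hindep x
    by_cases ha : a = 0
    · by_cases hb : b = 0
      · exact absurd (by rw [hab, ha, hb]; simp) hx
      · refine ⟨u, ?_⟩
        rw [hab]
        simp only [map_add, map_smul, LinearMap.add_apply, LinearMap.smul_apply,
          smul_eq_mul, halt]
        rw [skew v u]
        simp only [ha]
        intro hcontra
        apply hb
        have : b * -ω u v = 0 := by linarith
        rcases mul_eq_zero.1 this with h | h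
        · exact h
        · exact absurd (neg_eq_zero.1 h) huv
    · refine ⟨v, ?_⟩
      rw [hab]
      simp only [map_add, map_smul, LinearMap.add_apply, LinearMap.smul_apply,
        smul_eq_mul, halt]
      intro hcontra
      apply ha
      have : a * ω u v = 0 := by linarith
      exact (mul_eq_zero.1 this).resolve_right huv
  set S : Set ℝ := {r : ℝ | ∃ z : X, ‖z‖ = 1 ∧ r = |ω x z|} with hS
  have hmemS : |ω x y| ∈ S := ⟨y, hy, rfl⟩
  -- bounded above
  have hbdd : BddAbove S := by
    refine ⟨‖LinearMap.toContinuousLinearMap (ω x)‖, ?_⟩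
    rintro r ⟨z, hz, rfl⟩
    have := (LinearMap.toContinuousLinearMap (ω x)).le_opNorm z
    rw [hz, mul_one] at this
    simpa using this
  constructor
  · -- forward
    intro h t
    -- positivity of sSup
    have hwne : w ≠ 0 := fun hw0 => hw (by rw [hw0]; simp)
    have hwn : (0:ℝ) < ‖w‖ := norm_pos_iff.2 hwne
    have hz0 : ‖(‖w‖⁻¹ • w : X)‖ = 1 := by
      rw [norm_smul, norm_inv, norm_norm, inv_mul_cancel₀ hwn.ne']
    have hle : |ω x (‖w‖⁻¹ • w)| ≤ sSup S := le_csSup hbdd ⟨_, hz0, rfl⟩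
    have hzpos : 0 < |ω x (‖w‖⁻¹ • w)| := by
      rw [map_smul]
      simp only [smul_eq_mul, abs_mul]
      positivity
    have hpos : 0 < |ω x y| := h ▸ lt_of_lt_of_le hzpos hle
    by_cases h0 : y + t • x = 0
    · exfalso
      have : y = -(t • x) := eq_neg_of_add_eq_zero_left h0
      rw [this] at hpos
      simp only [map_neg, map_smul, smul_eq_mul, halt, mul_zero, neg_zero,
        abs_zero] at hpos
      exact lt_irrefl 0 hpos
    · have hc : (0:ℝ) < ‖y + t • x‖ := norm_pos_iff.2 h0
      set c := ‖y + t • x‖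
      have hz1 : ‖(c⁻¹ • (y + t • x) : X)‖ = 1 := by
        rw [norm_smul, norm_inv, Real.norm_eq_abs, abs_of_pos hc,
          inv_mul_cancel₀ hc.ne']
      have hval : |ω x (c⁻¹ • (y + t • x))| = c⁻¹ * |ω x y| := by
        rw [map_smul]
        simp only [smul_eq_mul, abs_mul, abs_inv, abs_of_pos hc, map_add,
          map_smul, smul_eq_mul, halt, mul_zero, add_zero]
      have hle2 : c⁻¹ * |ω x y| ≤ |ω x y| := by
        rw [← hval, h]
        exact le_csSup hbdd ⟨_, hz1, rfl⟩
      have hinv : c⁻¹ ≤ 1 := by nlinarith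
      have hcc : c * c⁻¹ = 1 := mul_inv_cancel₀ hc.ne'
      rw [hy]
      nlinarith
  · -- converse
    intro h
    have hxyindep : LinearIndependent ℝ ![x, y] := by
      rw [LinearIndependent.pair_iff]
      intro s t hst
      by_cases ht : t = 0
      · subst ht
        simp only [zero_smul, add_zero, smul_eq_zero] at hst
        exact ⟨hst.resolve_right hx, rfl⟩
      · exfalso
        have hy0 : y + (s / t) • x = 0 := by
          have heq : y + (s / t) • x = t⁻¹ • (s • x + t • y) := by
            rw [smul_add, smul_smul, smul_smul, inv_mul_cancel₀ ht, one_smul,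
              add_comm, div_eq_mul_inv, mul_comm]
          rw [heq, hst, smul_zero]
        have := h (s / t)
        rw [hy0, hy, norm_zero] at this
        linarith
    have hub : ∀ r ∈ S, r ≤ |ω x y| := by
      rintro r ⟨z, hz, rfl⟩
      obtain ⟨a, b, hab⟩ := decomp2 hdim hxyindep z
      have hval : ω x z = b * ω x y := by
        rw [hab]
        simp [halt]
      rw [hval, abs_mul]
      by_cases hb : b = 0
      · simp [hb]
      · have hbpos : 0 < |b| := abs_pos.2 hb
        have hdecomp : z = b • (y + (a / b) • x) := by
          rw [smul_add, smul_smul, mul_div_cancel₀ a hb, hab, add_comm]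
        have : (1:ℝ) = |b| * ‖y + (a / b) • x‖ := by
          rw [← hz, hdecomp, norm_smul, Real.norm_eq_abs]
        have hge : 1 ≤ ‖y + (a / b) • x‖ := by rw [← hy]; exact h (a / b)
        have hble : |b| ≤ 1 := by nlinarith
        nlinarith [abs_nonneg (ω x y)]
    exact (le_antisymm (csSup_le ⟨_, hmemS⟩ hub) (le_csSup hbdd hmemS)).symm
end

section
/- In a two-dimensional normed space X with determinant form [·,·], if x is Birkhoff orthogonal to y with respect to the norm, then y is Birkhoff orthogonal to x with respect to the anti-norm ‖z‖ₐ = sup{|[z,w]| : ‖w‖ = 1}. -/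
/-- The anti-norm reverses Birkhoff orthogonality: if x ⊣_B y in the
norm, then y ⊣_B x in the anti-norm ‖z‖ₐ = sup{|ω z w| : ‖w‖=1}. -/
theorem stmt_4 {X : Type*} [NormedAddCommGroup X] [NormedSpace ℝ X]
    (hdim : Module.finrank ℝ X = 2)
    (ω : X →ₗ[ℝ] X →ₗ[ℝ] ℝ) (halt : ∀ x : X, ω x x = 0) (hne : ω ≠ 0)
    (N : X → ℝ)
    (hN : ∀ z, N z = sSup {r : ℝ | ∃ w : X, ‖w‖ = 1 ∧ r = |ω z w|})
    (x y : X) (hxy : ∀ t : ℝ, ‖x‖ ≤ ‖x + t • y‖) :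
    ∀ t : ℝ, N y ≤ N (y + t • x) := by
  intro t
  haveI : FiniteDimensional ℝ X := FiniteDimensional.of_finrank_eq_succ (n := 1) hdim
  haveI : Nontrivial X := by
    apply Module.nontrivial_of_finrank_pos (R := ℝ)
    rw [hdim]; norm_num
  obtain ⟨w₀, hw₀⟩ : ∃ w : X, ‖w‖ = 1 := by
    obtain ⟨v, hv⟩ := exists_ne (0 : X)
    exact ⟨‖v‖⁻¹ • v, by
      rw [norm_smul, norm_inv, norm_norm, inv_mul_cancel₀ (norm_ne_zero_iff.2 hv)]⟩
  have hbdd : ∀ z : X, BddAbove {r : ℝ | ∃ w : X, ‖w‖ = 1 ∧ r = |ω z w|} := by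
    intro z
    refine ⟨‖LinearMap.toContinuousLinearMap (ω z)‖, ?_⟩
    rintro r ⟨w, hw, rfl⟩
    calc |ω z w| = ‖(LinearMap.toContinuousLinearMap (ω z)) w‖ := by
          simp [Real.norm_eq_abs]
      _ ≤ ‖LinearMap.toContinuousLinearMap (ω z)‖ * ‖w‖ :=
          ContinuousLinearMap.le_opNorm _ w
      _ = ‖LinearMap.toContinuousLinearMap (ω z)‖ := by rw [hw, mul_one]
  have hmem : ∀ z w : X, ‖w‖ = 1 → |ω z w| ≤ N z := fun z w hw => by
    rw [hN]; exact le_csSup (hbdd z) ⟨w, hw, rfl⟩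
  have hNneg : ∀ z : X, 0 ≤ N z := fun z =>
    le_trans (abs_nonneg _) (hmem z w₀ hw₀)
  by_cases hx : x = 0
  · subst hx; simp
  by_cases hy : y = 0
  · subst hy
    rw [hN]
    refine csSup_le ⟨|ω 0 w₀|, w₀, hw₀, rfl⟩ ?_
    rintro r ⟨w, hw, rfl⟩
    simpa using hNneg (0 + t • x)
  have hli : LinearIndependent ℝ ![x, y] := by
    rw [LinearIndependent.pair_iff]
    intro s u hsu
    by_cases hs : s = 0
    · subst hs
      simp only [zero_smul, zero_add] at hsu
      rcases smul_eq_zero.1 hsu with h | h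
      · exact ⟨rfl, h⟩
      · exact absurd h hy
    · exfalso
      have h0 : x + (u / s) • y = 0 := by
        have : s⁻¹ • (s • x + u • y) = 0 := by rw [hsu, smul_zero]
        rw [div_eq_inv_mul]
        rwa [smul_add, smul_smul, smul_smul, inv_mul_cancel₀ hs, one_smul] at this
      have := hxy (u / s)
      rw [h0, norm_zero] at this
      exact hx (norm_le_zero_iff.1 this)
  have hxnorm : (0 : ℝ) < ‖x‖ := norm_pos_iff.2 hx
  have step2 : |ω y x| / ‖x‖ ≤ N (y + t • x) := by
    have hw : ‖(‖x‖⁻¹ • x)‖ = 1 := by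
      rw [norm_smul, norm_inv, norm_norm, inv_mul_cancel₀ hxnorm.ne']
    have hval : |ω (y + t • x) (‖x‖⁻¹ • x)| = |ω y x| / ‖x‖ := by
      have : ω (y + t • x) (‖x‖⁻¹ • x) = ‖x‖⁻¹ * ω y x := by
        simp [map_add, map_smul, smul_eq_mul, halt]
      rw [this, abs_mul, abs_inv, abs_of_pos hxnorm, div_eq_inv_mul]
    calc |ω y x| / ‖x‖ = |ω (y + t • x) (‖x‖⁻¹ • x)| := hval.symm
      _ ≤ N (y + t • x) := hmem _ _ hw
  have step1 : N y ≤ |ω y x| / ‖x‖ := by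
    rw [hN]
    refine csSup_le ⟨|ω y w₀|, w₀, hw₀, rfl⟩ ?_
    rintro r ⟨w, hw, rfl⟩
    have hcard : Fintype.card (Fin 2) = Module.finrank ℝ X := by simp [hdim]
    let b := basisOfLinearIndependentOfCardEqFinrank hli hcard
    have hb0 : b 0 = x := by
      simp [b, coe_basisOfLinearIndependentOfCardEqFinrank]
    have hb1 : b 1 = y := by
      simp [b, coe_basisOfLinearIndependentOfCardEqFinrank]
    have hw' : b.repr w 0 • x + b.repr w 1 • y = w := by
      have := b.sum_repr w
      rwa [Fin.sum_univ_two, hb0, hb1] at this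
    set a := b.repr w 0 with ha
    set bb := b.repr w 1 with hbb
    have hωyw : ω y w = a * ω y x := by
      rw [← hw']
      simp [map_add, map_smul, smul_eq_mul, halt]
    by_cases haz : a = 0
    · rw [hωyw, haz, zero_mul, abs_zero]
      positivity
    · have hnorm : |a| * ‖x‖ ≤ 1 := by
        have hrw : a • x + bb • y = a • (x + (bb / a) • y) := by
          rw [smul_add, smul_smul, mul_div_cancel₀ _ haz]
        calc |a| * ‖x‖ ≤ |a| * ‖x + (bb / a) • y‖ :=
              mul_le_mul_of_nonneg_left (hxy (bb / a)) (abs_nonneg a)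
          _ = ‖a • (x + (bb / a) • y)‖ := by rw [norm_smul, Real.norm_eq_abs]
          _ = ‖w‖ := by rw [← hrw, hw']
          _ = 1 := hw
      have haa : |a| ≤ ‖x‖⁻¹ := by
        rw [← one_div]
        exact (le_div_iff₀ hxnorm).2 hnorm
      calc |ω y w| = |a| * |ω y x| := by rw [hωyw, abs_mul]
        _ ≤ ‖x‖⁻¹ * |ω y x| := mul_le_mul_of_nonneg_right haa (abs_nonneg _)
        _ = |ω y x| / ‖x‖ := by rw [div_eq_inv_mul]
  exact step1.trans step2
end

section
/- In a two-dimensional normed space with determinant form [·,·], for any nonzero vectors x, y with x Birkhoff orthogonal to y, one has |[x,y]| = ‖x‖·‖y‖ₐ, where ‖·‖ₐ is the anti-norm. -/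
/-- If x ⊣_B y (both nonzero), then |ω x y| = ‖x‖ · ‖y‖ₐ, where
‖·‖ₐ is the anti-norm associated with the determinant form ω. -/
theorem stmt_5 {X : Type*} [NormedAddCommGroup X] [NormedSpace ℝ X]
    (hdim : Module.finrank ℝ X = 2)
    (ω : X →ₗ[ℝ] X →ₗ[ℝ] ℝ) (halt : ∀ x : X, ω x x = 0) (hne : ω ≠ 0)
    (N : X → ℝ)
    (hN : ∀ z, N z = sSup {r : ℝ | ∃ w : X, ‖w‖ = 1 ∧ r = |ω z w|})
    (x y : X) (hx : x ≠ 0) (hy : y ≠ 0)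
    (hxy : ∀ t : ℝ, ‖x‖ ≤ ‖x + t • y‖) :
    |ω x y| = ‖x‖ * N y := by
  have hxnorm : (0:ℝ) < ‖x‖ := norm_pos_iff.mpr hx
  have hskew : ∀ u v : X, ω u v = - ω v u := by
    intro u v
    have h := halt (u + v)
    simp only [map_add, LinearMap.add_apply, halt u, halt v] at h
    linarith
  -- linear independence of x, y
  have hli : LinearIndependent ℝ ![x, y] := by
    rw [LinearIndependent.pair_iff]
    intro s t hst
    by_contra hc
    push_neg at hc
    rcases eq_or_ne t 0 with ht | ht
    · subst ht
      simp only [zero_smul, add_zero, smul_eq_zero] at hst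
      rcases hst with h | h
      · exact hc h (rfl)
      · exact hx h
    · rcases eq_or_ne s 0 with hs | hs
      · subst hs
        simp only [zero_smul, zero_add, smul_eq_zero] at hst
        rcases hst with h | h
        · exact ht h
        · exact hy h
      · -- x = (-t/s) • y
        have hxrep : x = (-t/s) • y := by
          have : s • x = -(t • y) := by
            have := hst
            rw [add_eq_zero_iff_eq_neg] at this
            exact this
          have := congrArg (fun z => s⁻¹ • z) this
          simp only [smul_smul, inv_mul_cancel₀ hs, one_smul, smul_neg] at this
          rw [this, ← neg_smul]
          congr 1
          field_simp
        have h0 := hxy (t/s)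
        rw [hxrep] at h0
        have : (-t/s) • y + (t/s) • y = 0 := by
          rw [← add_smul]; ring_nf; simp
        rw [this, norm_zero] at h0
        have : ‖x‖ ≤ 0 := by rw [hxrep]; exact h0
        linarith
  -- basis
  have hcard : Fintype.card (Fin 2) = Module.finrank ℝ X := by simp [hdim]
  let B := basisOfLinearIndependentOfCardEqFinrank hli hcard
  have hB : ∀ i, B i = ![x, y] i := by
    intro i
    rw [coe_basisOfLinearIndependentOfCardEqFinrank]
  have hrep : ∀ w : X, ∃ a b : ℝ, w = a • x + b • y := by
    intro w
    refine ⟨B.repr w 0, B.repr w 1, ?_⟩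
    have := B.sum_repr w
    rw [Fin.sum_univ_two] at this
    rw [hB 0, hB 1] at this
    simp only [Matrix.cons_val_zero, Matrix.cons_val_one, Matrix.head_cons] at this
    exact this.symm
  -- computation of ω on combinations
  have hcalc : ∀ a b : ℝ, ω (a • x + b • y) y = a * ω x y := by
    intro a b
    simp [map_add, map_smul, LinearMap.add_apply, LinearMap.smul_apply, halt y,
      smul_eq_mul]
  -- Birkhoff bound
  have hbound : ∀ a b : ℝ, |a| * ‖x‖ ≤ ‖a • x + b • y‖ := by
    intro a b
    rcases eq_or_ne a 0 with ha | ha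
    · simp [ha, norm_nonneg]
    · have : a • x + b • y = a • (x + (a⁻¹ * b) • y) := by
        rw [smul_add, smul_smul, mul_inv_cancel_left₀ ha]
      rw [this, norm_smul, Real.norm_eq_abs]
      exact mul_le_mul_of_nonneg_left (hxy (a⁻¹ * b)) (abs_nonneg a)
  set S : Set ℝ := {r : ℝ | ∃ w : X, ‖w‖ = 1 ∧ r = |ω y w|} with hS
  set r : ℝ := |ω x y| / ‖x‖ with hr
  have hmem : r ∈ S := by
    refine ⟨‖x‖⁻¹ • x, ?_, ?_⟩
    · rw [norm_smul, Real.norm_eq_abs, abs_inv, abs_of_pos hxnorm,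
        inv_mul_cancel₀ hxnorm.ne']
    · rw [map_smul, smul_eq_mul, abs_mul, abs_inv, abs_of_pos hxnorm]
      rw [hr, hskew y x, abs_neg]
      ring
  have hub : ∀ r' ∈ S, r' ≤ r := by
    rintro r' ⟨w, hw1, rfl⟩
    obtain ⟨a, b, rfl⟩ := hrep w
    have h1 : |a| * ‖x‖ ≤ 1 := by rw [← hw1]; exact hbound a b
    have h2 : |a| ≤ 1 / ‖x‖ := (le_div_iff₀ hxnorm).mpr h1
    have h3 : |ω y (a • x + b • y)| = |a| * |ω x y| := by
      rw [hskew y, abs_neg, hcalc a b, abs_mul]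
    rw [h3, hr, div_eq_mul_inv, mul_comm |ω x y| (‖x‖)⁻¹]
    calc |a| * |ω x y| ≤ (1 / ‖x‖) * |ω x y| :=
          mul_le_mul_of_nonneg_right h2 (abs_nonneg _)
      _ = (‖x‖)⁻¹ * |ω x y| := by rw [one_div]
  have hsup : sSup S = r :=
    le_antisymm (csSup_le ⟨r, hmem⟩ hub) (le_csSup ⟨r, hub⟩ hmem)
  rw [hN y, ← hS, hsup, hr]
  field_simp
end

section
/- If φ : [0, 2λ(B)] → X is a positively oriented parametrization of the unit circle of a two-dimensional normed space by twice the sector area (i.e., [φ(u), φ'(u)] = 1 for all u), then ‖φ'(u)‖ₐ = 1 for all u; that is, the area parametrization of the unit circle is an arc-length parametrization with respect to the anti-norm. -/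
/-!
At `φ u` pick a norming functional `f` (`‖f‖ = 1`, `f (φ u) = 1`). Since `f ∘ φ` is maximal
at `u`, `f (φ' u) = 0`. As `[φ u, φ' u] = 1`, the vectors `φ u, φ' u` form a basis, and on it
the functionals `[φ' u, ·]` and `-f` agree. Hence `|[φ' u, w]| = |f w| ≤ 1` for unit `w`, with
equality at `w = φ u`.
-/

open Module

theorem LinearMap.IsAlt.linearIndependent_pair {K M : Type*} [Field K] [AddCommGroup M]
    [Module K M] {ω : M →ₗ[K] M →ₗ[K] K} (hω : ω.IsAlt) {x y : M} (hxy : ω x y ≠ 0) :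
    LinearIndependent K ![x, y] := by
  rw [LinearIndependent.pair_iff]
  intro s t hst
  have hs := congrArg (ω · y) hst
  have ht := congrArg (ω x) hst
  simp only [map_add, map_smul, LinearMap.add_apply, LinearMap.smul_apply, smul_eq_mul,
    hω.self_eq_zero, map_zero, LinearMap.zero_apply] at hs ht
  exact ⟨by simpa [hxy] using hs, by simpa [hxy] using ht⟩

theorem LinearMap.ext_of_linearIndependent_pair {K V W : Type*} [Field K] [AddCommGroup V]
    [Module K V] [AddCommGroup W] [Module K W] (hdim : finrank K V = 2) {x y : V}
    (hxy : LinearIndependent K ![x, y]) {f g : V →ₗ[K] W} (hx : f x = g x) (hy : f y = g y) :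
    f = g :=
  LinearMap.ext_on_range (hxy.span_eq_top_of_card_eq_finrank (by simp [hdim]))
    (Fin.forall_fin_two.2 ⟨hx, hy⟩)

theorem HasDerivAt.apply_eq_zero_of_norm_le_one {E : Type*} [NormedAddCommGroup E]
    [NormedSpace ℝ E] {φ : ℝ → E} {v : E} {u : ℝ} (hv : HasDerivAt φ v u)
    (f : StrongDual ℝ E) (hf : ‖f‖ ≤ 1) (hφ : ∀ t, ‖φ t‖ ≤ 1) (hfφ : f (φ u) = 1) :
    f v = 0 := by
  have hmax : IsLocalMax (fun t => f (φ t)) u := Filter.Eventually.of_forall fun t => by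
    have := (f.unit_le_opNorm (φ t) (hφ t)).trans hf
    rw [Real.norm_eq_abs] at this
    simpa only [hfφ] using (le_abs_self _).trans this
  exact hmax.hasDerivAt_eq_zero (f.hasFDerivAt.comp_hasDerivAt u hv)

theorem stmt_6_general {X : Type*} [NormedAddCommGroup X] [NormedSpace ℝ X]
    (hdim : Module.finrank ℝ X = 2)
    (ω : X →ₗ[ℝ] X →ₗ[ℝ] ℝ) (halt : ∀ x : X, ω x x = 0)
    (N : X → ℝ)
    (hN : ∀ z, N z = sSup {r : ℝ | ∃ w : X, ‖w‖ = 1 ∧ r = |ω z w|})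
    (φ : ℝ → X) (φd : ℝ → X)
    (hcircle : ∀ u, ‖φ u‖ = 1)
    (hderiv : ∀ u, HasDerivAt φ (φd u) u)
    (harea : ∀ u, ω (φ u) (φd u) = 1) :
    ∀ u, N (φd u) = 1 := by
  intro u
  obtain ⟨f, hf_norm, hf_φ⟩ := exists_dual_vector ℝ (φ u) (by simp [hcircle u])
  replace hf_φ : f (φ u) = 1 := by simpa [hcircle u] using hf_φ
  have hf_φd : f (φd u) = 0 :=
    (hderiv u).apply_eq_zero_of_norm_le_one f hf_norm.le (fun t => (hcircle t).le) hf_φ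
  have hω : ω (φd u) = -(f : X →ₗ[ℝ] ℝ) :=
    LinearMap.ext_of_linearIndependent_pair hdim
      (LinearMap.IsAlt.linearIndependent_pair halt ((harea u).symm ▸ one_ne_zero))
      (by rw [← LinearMap.IsAlt.neg halt, harea u]; simp [hf_φ]) (by rw [halt]; simp [hf_φd])
  rw [hN, hω]
  refine IsGreatest.csSup_eq ⟨⟨φ u, hcircle u, by simp [hf_φ]⟩, ?_⟩
  rintro _ ⟨w, hw, rfl⟩
  simpa [← hf_norm] using f.unit_le_opNorm w hw.le

/-- If φ is a parametrization of the unit circle with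
[φ(u), φ'(u)] = 1 for all u (twice sector area parametrization), then
‖φ'(u)‖ₐ = 1 for all u: the area parametrization is an anti-norm arc-length
parametrization. -/
theorem stmt_6 {X : Type*} [NormedAddCommGroup X] [NormedSpace ℝ X]
    [StrictConvexSpace ℝ X] (hdim : Module.finrank ℝ X = 2)
    (ω : X →ₗ[ℝ] X →ₗ[ℝ] ℝ) (halt : ∀ x : X, ω x x = 0) (hne : ω ≠ 0)
    (N : X → ℝ)
    (hN : ∀ z, N z = sSup {r : ℝ | ∃ w : X, ‖w‖ = 1 ∧ r = |ω z w|})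
    (φ : ℝ → X) (φd : ℝ → X)
    (hcircle : ∀ u, ‖φ u‖ = 1)
    (hderiv : ∀ u, HasDerivAt φ (φd u) u)
    (harea : ∀ u, ω (φ u) (φd u) = 1) :
    ∀ u, N (φd u) = 1 :=
  stmt_6_general hdim ω halt N hN φ φd hcircle hderiv harea
end

section
/- Let T : X → X be a surjective isometry of a two-dimensional normed space X fixing the origin, with a fixed determinant form [·,·]. Then T is also an isometry with respect to the anti-norm ‖z‖ₐ = sup{|[z,w]| : ‖w‖ = 1}. -/
/-!
By Mazur–Ulam, `T` is a linear isometry. In dimension two every alternating bilinear form is a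
multiple of the determinant form, so `ω (T z) (T w) = det T * ω z w`; and `|det T| = 1` because
`T` preserves the unit ball and hence its Haar measure. Thus `|ω (T z) (T w)| = |ω z w|`, and since
`T` permutes the unit sphere, the suprema defining the anti-norms of `T z` and `z` coincide.
-/

open MeasureTheory

theorem AlternatingMap.apply_comp_eq_det_mul {R M ι : Type*} [CommRing R] [AddCommGroup M]
    [Module R M] [Fintype ι] [DecidableEq ι] (b : Module.Basis ι R M) (f : M [⋀^ι]→ₗ[R] R)
    (g : M →ₗ[R] M) (v : ι → M) :
    f (g ∘ v) = LinearMap.det g * f v := by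
  rw [f.eq_smul_basis_det b]
  simp only [AlternatingMap.smul_apply, smul_eq_mul, b.det_comp]
  ring

def LinearMap.toAlternatingMapFinTwo {R M : Type*} [CommSemiring R] [AddCommMonoid M]
    [Module R M] (ω : M →ₗ[R] M →ₗ[R] R) (halt : ∀ x, ω x x = 0) :
    M [⋀^Fin 2]→ₗ[R] R where
  toFun v := ω (v 0) (v 1)
  map_update_add' v i a b := by fin_cases i <;> simp
  map_update_smul' v i c a := by fin_cases i <;> simp
  map_eq_zero_of_eq' v i j hv hij := by
    fin_cases i <;> fin_cases j
    · exact absurd rfl hij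
    · change ω (v 0) (v 1) = 0
      rw [show v 0 = v 1 from hv]; exact halt _
    · change ω (v 0) (v 1) = 0
      rw [show v 1 = v 0 from hv]; exact halt _
    · exact absurd rfl hij

theorem LinearMap.apply_map_map_eq_det_mul {K M : Type*} [Field K] [AddCommGroup M] [Module K M]
    (hdim : Module.finrank K M = 2)
    (ω : M →ₗ[K] M →ₗ[K] K) (halt : ∀ x, ω x x = 0) (g : M →ₗ[K] M) (x y : M) :
    ω (g x) (g y) = LinearMap.det g * ω x y := by
  have : Module.Finite K M := Module.finite_of_finrank_eq_succ hdim
  have hcomp : ![g x, g y] = g ∘ ![x, y] := by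
    funext i; fin_cases i <;> rfl
  simpa [LinearMap.toAlternatingMapFinTwo, hcomp] using
    (ω.toAlternatingMapFinTwo halt).apply_comp_eq_det_mul
      (Module.finBasisOfFinrankEq K M hdim) g ![x, y]

theorem LinearIsometryEquiv.abs_det_eq_one {E : Type*} [NormedAddCommGroup E] [NormedSpace ℝ E]
    [FiniteDimensional ℝ E] (e : E ≃ₗᵢ[ℝ] E) :
    |LinearMap.det (e.toLinearEquiv : E →ₗ[ℝ] E)| = 1 := by
  borelize E
  let μ : Measure E := (Module.finBasis ℝ E).addHaar
  have hball : μ (Metric.ball 0 1) = ENNReal.ofReal |LinearMap.det (e.toLinearEquiv : E →ₗ[ℝ] E)|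
      * μ (Metric.ball 0 1) := by
    rw [← μ.addHaar_image_linearMap]
    exact congrArg μ (by simp [e.image_ball])
  rw [eq_comm, ENNReal.mul_eq_right (Metric.measure_ball_pos μ 0 one_pos).ne'
    measure_ball_lt_top.ne, ENNReal.ofReal_eq_one] at hball
  exact hball

theorem Isometry.exists_linearIsometryEquiv_of_surjective {E F : Type*} [NormedAddCommGroup E]
    [NormedSpace ℝ E] [NormedAddCommGroup F] [NormedSpace ℝ F] {T : E → F} (hT : Isometry T)
    (hsurj : Function.Surjective T) (h0 : T 0 = 0) :
    ∃ e : E ≃ₗᵢ[ℝ] F, ⇑e = T :=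
  let ie : E ≃ᵢ F := ⟨Equiv.ofBijective T ⟨hT.injective, hsurj⟩, hT⟩
  ⟨ie.toRealLinearIsometryEquivOfMapZero h0, ie.coe_toRealLinearIsometryEquivOfMapZero h0⟩

section Antinorm

variable {X : Type*} [NormedAddCommGroup X] [NormedSpace ℝ X]

noncomputable def antinorm (ω : X →ₗ[ℝ] X →ₗ[ℝ] ℝ) (z : X) : ℝ :=
  sSup {r : ℝ | ∃ w : X, ‖w‖ = 1 ∧ r = |ω z w|}

theorem antinorm_map (ω : X →ₗ[ℝ] X →ₗ[ℝ] ℝ) (e : X ≃ₗᵢ[ℝ] X)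
    (he : ∀ x y, |ω (e x) (e y)| = |ω x y|) (z : X) :
    antinorm ω (e z) = antinorm ω z := by
  unfold antinorm
  congr 1
  ext r
  rw [Set.mem_ofPred, Set.mem_ofPred, e.surjective.exists]
  simp only [e.norm_map, he]

end Antinorm

theorem stmt_7_general {X : Type*} [NormedAddCommGroup X] [NormedSpace ℝ X]
    (hdim : Module.finrank ℝ X = 2)
    (ω : X →ₗ[ℝ] X →ₗ[ℝ] ℝ) (halt : ∀ x : X, ω x x = 0)
    (N : X → ℝ)
    (hN : ∀ z, N z = sSup {r : ℝ | ∃ w : X, ‖w‖ = 1 ∧ r = |ω z w|})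
    (T : X → X) (hsurj : Function.Surjective T) (h0 : T 0 = 0)
    (hiso : ∀ u v : X, ‖T u - T v‖ = ‖u - v‖) :
    ∀ u v : X, N (T u - T v) = N (u - v) := by
  have : FiniteDimensional ℝ X := .of_finrank_eq_succ hdim
  have hT : Isometry T := .of_dist_eq fun u v => by simpa only [dist_eq_norm] using hiso u v
  obtain ⟨e, rfl⟩ := hT.exists_linearIsometryEquiv_of_surjective hsurj h0
  have hω : ∀ x y, |ω (e x) (e y)| = |ω x y| := fun x y => by
    rw [← e.coe_toLinearEquiv, ← LinearEquiv.coe_coe,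
      LinearMap.apply_map_map_eq_det_mul hdim ω halt, abs_mul, e.abs_det_eq_one, one_mul]
  have hN' : N = antinorm ω := funext hN
  intro u v
  rw [hN', ← map_sub, antinorm_map ω e hω]

/-- A surjective isometry of a 2-dimensional normed space fixing the
origin is also an isometry for the anti-norm ‖z‖ₐ = sup{|ω z w| : ‖w‖=1}. -/
theorem stmt_7 {X : Type*} [NormedAddCommGroup X] [NormedSpace ℝ X]
    (hdim : Module.finrank ℝ X = 2)
    (ω : X →ₗ[ℝ] X →ₗ[ℝ] ℝ) (halt : ∀ x : X, ω x x = 0) (hne : ω ≠ 0)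
    (N : X → ℝ)
    (hN : ∀ z, N z = sSup {r : ℝ | ∃ w : X, ‖w‖ = 1 ∧ r = |ω z w|})
    (T : X → X) (hsurj : Function.Surjective T) (h0 : T 0 = 0)
    (hiso : ∀ u v : X, ‖T u - T v‖ = ‖u - v‖) :
    ∀ u v : X, N (T u - T v) = N (u - v) :=
  stmt_7_general hdim ω halt N hN T hsurj h0 hiso
end

section
/- Let γ : [0,c] → X be a C² regular curve in a two-dimensional normed plane with smooth strictly convex unit circle, parametrized by arc length, with nonvanishing circular curvature. If all left-normal lines of γ (the lines through γ(s) in the direction φ(t(s)), where φ'(t(s)) = γ'(s) for the arc-length parametrized unit circle φ) pass through a common point p, then γ has constant circular curvature, i.e., γ is contained in a Minkowski circle centered at p. -/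
/-!
Write `γ s - p = r s • φ (t s)`. At a parameter `s₀`, a norming functional `ℓ` of `φ (t s₀)`
is maximised on the unit circle there, so it kills the tangent `φd (t s₀)`, to which both
`γ'` and `(φ ∘ t)'` are parallel. Near `s₀` the radius is the quotient
`ℓ (γ s - p) / ℓ (φ (t s))`, whose derivative at `s₀` therefore vanishes; hence `r` is a
constant `R`. Differentiating `γ - p = R • (φ ∘ t)` then gives `φd = R • kc • φd`, i.e.
`R * kc = 1`.
-/

open Set Filter Topology

section

variable {X : Type*} [NormedAddCommGroup X] [NormedSpace ℝ X]

theorem exists_dual_eq_one_and_deriv_eq_zero {φ : ℝ → X} {φ' : X} {u : ℝ}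
    (hφ : ∀ v, ‖φ v‖ = 1) (hφ' : HasDerivAt φ φ' u) :
    ∃ ℓ : X →L[ℝ] ℝ, ℓ (φ u) = 1 ∧ ℓ φ' = 0 := by
  obtain ⟨ℓ, hℓ_norm, hℓ_eq⟩ := exists_dual_vector'' ℝ (φ u)
  rw [hφ u] at hℓ_eq
  refine ⟨ℓ, hℓ_eq, ?_⟩
  have hmax : IsLocalMax (fun v => ℓ (φ v)) u := Eventually.of_forall fun v => by
    calc ℓ (φ v) ≤ ‖ℓ‖ * ‖φ v‖ := (le_abs_self _).trans (ℓ.le_opNorm _)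
      _ ≤ ℓ (φ u) := by rw [hφ v, mul_one, hℓ_eq]; exact hℓ_norm
  exact hmax.hasDerivAt_eq_zero (ℓ.hasFDerivAt.comp_hasDerivAt u hφ')

/-- `r` need not be differentiable, but near `x` it coincides on `S` with the differentiable
quotient `ℓ ∘ f / ℓ ∘ g`. -/
theorem hasDerivWithinAt_zero_of_eqOn_smul {f g : ℝ → X} {f' g' : X} {r : ℝ → ℝ}
    {S : Set ℝ} {x : ℝ} (ℓ : X →L[ℝ] ℝ) (hf : HasDerivAt f f' x) (hg : HasDerivAt g g' x)
    (hfg : ∀ y ∈ S, f y = r y • g y) (hx : x ∈ S) (hℓg : ℓ (g x) ≠ 0) (hℓf' : ℓ f' = 0)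
    (hℓg' : ℓ g' = 0) : HasDerivWithinAt r 0 S x := by
  have hℓf : HasDerivAt (fun y => ℓ (f y)) (ℓ f') x := ℓ.hasFDerivAt.comp_hasDerivAt x hf
  have hℓg_deriv : HasDerivAt (fun y => ℓ (g y)) (ℓ g') x := ℓ.hasFDerivAt.comp_hasDerivAt x hg
  have hquot : HasDerivAt (fun y => ℓ (f y) / ℓ (g y)) 0 x := by
    simpa [hℓf', hℓg'] using hℓf.fun_div hℓg_deriv hℓg
  have hne : ∀ᶠ y in 𝓝[S] x, ℓ (g y) ≠ 0 :=
    nhdsWithin_le_nhds (hℓg_deriv.continuousAt.eventually_ne hℓg)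
  refine hquot.hasDerivWithinAt.congr_of_eventuallyEq_of_mem ?_ hx
  filter_upwards [hne, self_mem_nhdsWithin] with y hy hyS
  rw [hfg y hyS, map_smul, smul_eq_mul, mul_div_cancel_right₀ _ hy]

theorem Convex.eqOn_of_hasDerivWithinAt_zero {r : ℝ → ℝ} {S : Set ℝ} (hS : Convex ℝ S)
    (hr : ∀ x ∈ S, HasDerivWithinAt r 0 S x) {x y : ℝ} (hx : x ∈ S) (hy : y ∈ S) :
    r y = r x := by
  have h := hS.norm_image_sub_le_of_norm_hasDerivWithin_le hr (fun _ _ => norm_zero.le) hx hy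
  rw [zero_mul, norm_le_zero_iff, sub_eq_zero] at h
  exact h

theorem mul_eq_one_of_eqOn_smul {f g : ℝ → X} {v : X} {R k : ℝ} {S : Set ℝ} {x : ℝ}
    (hS : UniqueDiffWithinAt ℝ S x) (hf : HasDerivAt f v x) (hg : HasDerivAt g (k • v) x)
    (hfg : ∀ y ∈ S, f y = R • g y) (hx : x ∈ S) (hv : v ≠ 0) : R * k = 1 := by
  have hRg : HasDerivWithinAt f (R • k • v) S x :=
    ((hg.const_smul R).hasDerivWithinAt).congr hfg (hfg x hx)
  have h : (R * k - 1) • v = 0 := by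
    rw [sub_smul, one_smul, ← smul_smul, sub_eq_zero]
    exact (hS.eq_deriv _ hf.hasDerivWithinAt hRg).symm
  exact sub_eq_zero.1 ((smul_eq_zero.1 h).resolve_right hv)

end

theorem stmt_10_general {X : Type*} [NormedAddCommGroup X] [NormedSpace ℝ X]
    (c : ℝ) (hc : 0 < c)
    (φ : ℝ → X) (φd : ℝ → X)
    (hφ : ∀ u, ‖φ u‖ = 1) (hφd : ∀ u, HasDerivAt φ (φd u) u)
    (hφarc : ∀ u, ‖φd u‖ = 1)
    (γ : ℝ → X) (t kc : ℝ → ℝ)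
    (ht : ∀ s, HasDerivAt t (kc s) s)
    (hγ : ∀ s, HasDerivAt γ (φd (t s)) s)
    (p : X)
    (hnormal : ∀ s ∈ Set.Icc (0:ℝ) c, ∃ r : ℝ, γ s = p + r • φ (t s)) :
    (∀ s₁ ∈ Set.Icc (0:ℝ) c, ∀ s₂ ∈ Set.Icc (0:ℝ) c, kc s₁ = kc s₂) ∧
      ∃ R : ℝ, ∀ s ∈ Set.Icc (0:ℝ) c, ‖γ s - p‖ = R := by
  choose! r hr using hnormal
  have hγp : ∀ s ∈ Icc 0 c, γ s - p = r s • φ (t s) := fun s hs => by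
    rw [hr s hs, add_sub_cancel_left]
  have hφt : ∀ s, HasDerivAt (fun s => φ (t s)) (kc s • φd (t s)) s :=
    fun s => (hφd (t s)).scomp s (ht s)
  have hr_deriv : ∀ s ∈ Icc 0 c, HasDerivWithinAt r 0 (Icc 0 c) s := fun s hs => by
    obtain ⟨ℓ, hℓφ, hℓφd⟩ := exists_dual_eq_one_and_deriv_eq_zero hφ (hφd (t s))
    exact hasDerivWithinAt_zero_of_eqOn_smul ℓ ((hγ s).sub_const p) (hφt s) hγp hs
      (by rw [hℓφ]; exact one_ne_zero) hℓφd (by rw [map_smul, hℓφd, smul_zero])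
  have h0 : (0 : ℝ) ∈ Icc 0 c := left_mem_Icc.2 hc.le
  have hr_const : ∀ s ∈ Icc 0 c, r s = r 0 := fun s hs =>
    (convex_Icc 0 c).eqOn_of_hasDerivWithinAt_zero hr_deriv h0 hs
  have hcurv : ∀ s ∈ Icc 0 c, r 0 * kc s = 1 := fun s hs =>
    mul_eq_one_of_eqOn_smul (uniqueDiffOn_Icc hc s hs) ((hγ s).sub_const p) (hφt s)
      (fun y hy => by rw [hγp y hy, hr_const y hy]) hs (norm_ne_zero_iff.1 (by simp [hφarc]))
  refine ⟨fun s₁ h₁ s₂ h₂ => ?_, |r 0|, fun s hs => ?_⟩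
  · exact mul_left_cancel₀ (left_ne_zero_of_mul_eq_one (hcurv s₁ h₁))
      ((hcurv s₁ h₁).trans (hcurv s₂ h₂).symm)
  · rw [hγp s hs, norm_smul, hφ, mul_one, hr_const s hs, Real.norm_eq_abs]

/-- If all left-normal lines of a regular arc-length parametrized
curve γ (with nonvanishing circular curvature) in a strictly convex normed plane
pass through a common point p, then γ has constant circular curvature and is
contained in a Minkowski circle centered at p. Here φ is an arc-length
parametrization of the unit circle, γ'(s) = φ'(t(s)), and k_c(s) = t'(s). -/
theorem stmt_10 {X : Type*} [NormedAddCommGroup X] [NormedSpace ℝ X]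
    [StrictConvexSpace ℝ X] (hdim : Module.finrank ℝ X = 2)
    (c : ℝ) (hc : 0 < c)
    (φ : ℝ → X) (φd : ℝ → X)
    (hφ : ∀ u, ‖φ u‖ = 1) (hφd : ∀ u, HasDerivAt φ (φd u) u)
    (hφarc : ∀ u, ‖φd u‖ = 1)
    (γ : ℝ → X) (t kc : ℝ → ℝ)
    (ht : ∀ s, HasDerivAt t (kc s) s)
    (hkc : ∀ s, kc s ≠ 0)
    (hγ : ∀ s, HasDerivAt γ (φd (t s)) s)
    (p : X)
    (hnormal : ∀ s ∈ Set.Icc (0:ℝ) c, ∃ r : ℝ, γ s = p + r • φ (t s)) :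
    (∀ s₁ ∈ Set.Icc (0:ℝ) c, ∀ s₂ ∈ Set.Icc (0:ℝ) c, kc s₁ = kc s₂) ∧
      ∃ R : ℝ, ∀ s ∈ Set.Icc (0:ℝ) c, ‖γ s - p‖ = R :=
  stmt_10_general c hc φ φd hφ hφd hφarc γ t kc ht hγ p hnormal
end

section
/- Let γ, σ : [0,2π] → ℝ² be simple, closed, positively oriented, strictly convex C² curves parametrized by the angle θ of their outward normals, with equal Euclidean support function values and derivatives at θ = 0. If the Euclidean curvature of γ is at most that of σ at every θ, then the support function of γ is at least that of σ everywhere on [0,π] (with analogous statement on the reversed arc), and hence σ lies in the region bounded by γ. -/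
/-!
If `u'' + u ≥ 0` and `u` vanishes to first order at `a`, then for `|θ - a| ≤ π` the quantity
`u' s sin (θ - s) + u s cos (θ - s)` moves monotonically from `0` at `s = a` to `u θ` at `s = θ`,
its derivative being `(u'' s + u s) sin (θ - s)`; by `2π`-periodicity `u ≥ 0` everywhere.
Applied to `h_γ - h_σ` this is the comparison of support functions. Applied to `h_σ` minus the
sinusoid tangent to it at `θ`, which is the support function of the point of `σ` with normal `θ`,
it shows that this point lies in every supporting half-plane `{p | ⟪p, (cos φ, sin φ)⟫ ≤ h_σ φ}`,
and hence, by the comparison, in those of `γ`.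
-/

open Real Set

theorem nonneg_of_deriv_deriv_add_nonneg {u u' u'' : ℝ → ℝ}
    (hu : ∀ x, HasDerivAt u (u' x) x) (hu' : ∀ x, HasDerivAt u' (u'' x) x)
    (hf : ∀ x, 0 ≤ u'' x + u x) {a : ℝ} (h₀ : u a = 0) (h₁ : u' a = 0)
    {θ : ℝ} (hθ : θ ∈ Icc (a - π) (a + π)) : 0 ≤ u θ := by
  set φ : ℝ → ℝ := fun s => u' s * sin (θ - s) + u s * cos (θ - s) with hφ_def
  have hφ : ∀ s, HasDerivAt φ ((u'' s + u s) * sin (θ - s)) s := by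
    intro s
    have hlin : HasDerivAt (fun s => θ - s) (-1) s := by
      simpa using (hasDerivAt_id s).const_sub θ
    refine (((hu' s).mul hlin.sin).add ((hu s).mul hlin.cos)).congr_deriv ?_
    ring
  have hφc : Continuous φ := continuous_iff_continuousAt.2 fun s => (hφ s).continuousAt
  have hφa : φ a = 0 := by simp [hφ_def, h₀, h₁]
  have hφθ : φ θ = u θ := by simp [hφ_def]
  rw [← hφθ, ← hφa]
  rcases le_total a θ with haθ | hθa
  · have hmono : MonotoneOn φ (Icc a θ) := by
      refine monotoneOn_of_hasDerivWithinAt_nonneg (convex_Icc a θ) hφc.continuousOn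
        (fun s _ => (hφ s).hasDerivWithinAt) fun s hs => ?_
      rw [interior_Icc] at hs
      exact mul_nonneg (hf s)
        (sin_nonneg_of_nonneg_of_le_pi (by linarith [hs.2]) (by linarith [hs.1, hθ.2]))
    exact hmono (left_mem_Icc.2 haθ) (right_mem_Icc.2 haθ) haθ
  · have hanti : AntitoneOn φ (Icc θ a) := by
      refine antitoneOn_of_hasDerivWithinAt_nonpos (convex_Icc θ a) hφc.continuousOn
        (fun s _ => (hφ s).hasDerivWithinAt) fun s hs => ?_
      rw [interior_Icc] at hs
      exact mul_nonpos_of_nonneg_of_nonpos (hf s)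
        (sin_nonpos_of_nonpos_of_neg_pi_le (by linarith [hs.1]) (by linarith [hs.2, hθ.1]))
    exact hanti (left_mem_Icc.2 hθa) (right_mem_Icc.2 hθa) hθa

namespace Function.Periodic

variable {u u' u'' : ℝ → ℝ}

theorem nonneg_of_deriv_deriv_add_nonneg (hper : Periodic u (2 * π))
    (hu : ∀ x, HasDerivAt u (u' x) x) (hu' : ∀ x, HasDerivAt u' (u'' x) x)
    (hf : ∀ x, 0 ≤ u'' x + u x) {a : ℝ} (h₀ : u a = 0) (h₁ : u' a = 0) (θ : ℝ) :
    0 ≤ u θ := by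
  obtain ⟨θ₀, hθ₀, hθθ₀⟩ := hper.exists_mem_Ico two_pi_pos θ (a - π)
  rw [hθθ₀]
  exact _root_.nonneg_of_deriv_deriv_add_nonneg hu hu' hf h₀ h₁
    (Ico_subset_Icc_self (by rwa [show a - π + 2 * π = a + π by ring] at hθ₀))

theorem tangent_sinusoid_le_of_deriv_deriv_add_nonneg (hper : Periodic u (2 * π))
    (hu : ∀ x, HasDerivAt u (u' x) x) (hu' : ∀ x, HasDerivAt u' (u'' x) x)
    (hf : ∀ x, 0 ≤ u'' x + u x) (θ φ : ℝ) :
    u θ * cos (φ - θ) + u' θ * sin (φ - θ) ≤ u φ := by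
  have hsinusoid : ∀ x, HasDerivAt (fun x => u θ * cos (x - θ) + u' θ * sin (x - θ))
      (-(u θ * sin (x - θ)) + u' θ * cos (x - θ)) x := by
    intro x
    have hlin : HasDerivAt (fun x => x - θ) 1 x := (hasDerivAt_id x).sub_const θ
    refine ((hlin.cos.const_mul (u θ)).add (hlin.sin.const_mul (u' θ))).congr_deriv ?_
    ring
  have hsinusoid' : ∀ x, HasDerivAt (fun x => -(u θ * sin (x - θ)) + u' θ * cos (x - θ))
      (-(u θ * cos (x - θ)) - u' θ * sin (x - θ)) x := by
    intro x
    have hlin : HasDerivAt (fun x => x - θ) 1 x := (hasDerivAt_id x).sub_const θ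
    refine ((hlin.sin.const_mul (u θ)).neg.add (hlin.cos.const_mul (u' θ))).congr_deriv ?_
    ring
  have hper' : Periodic (fun x => u x - (u θ * cos (x - θ) + u' θ * sin (x - θ))) (2 * π) := by
    intro x
    simp only [hper x, show x + 2 * π - θ = x - θ + 2 * π by ring, cos_add_two_pi,
      sin_add_two_pi]
  have key := hper'.nonneg_of_deriv_deriv_add_nonneg (fun x => (hu x).sub (hsinusoid x))
    (fun x => (hu' x).sub (hsinusoid' x)) (fun x => by linarith [hf x]) (a := θ)
    (by simp) (by simp) φ
  linarith

end Function.Periodic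

/-- Comparison of convex curves via support functions. If two
closed strictly convex C² curves, described by their 2π-periodic support
functions h_γ, h_σ with h'' + h = 1/k_e > 0, share support value and derivative
at θ = 0, and the Euclidean curvature of γ is at most that of σ everywhere,
then h_σ ≤ h_γ on [0,π] (and, by the reversed-arc argument, everywhere), hence
every point of σ lies in the region bounded by γ (its coordinates satisfy all
supporting inequalities of γ). -/
theorem stmt_16 (hγ hσ kγ kσ : ℝ → ℝ)
    (hγC2 : ContDiff ℝ 2 hγ) (hσC2 : ContDiff ℝ 2 hσ)
    (hγper : Function.Periodic hγ (2 * Real.pi))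
    (hσper : Function.Periodic hσ (2 * Real.pi))
    (hkγpos : ∀ θ, 0 < kγ θ) (hkσpos : ∀ θ, 0 < kσ θ)
    (hodeγ : ∀ θ, deriv (deriv hγ) θ + hγ θ = 1 / kγ θ)
    (hodeσ : ∀ θ, deriv (deriv hσ) θ + hσ θ = 1 / kσ θ)
    (hinit1 : hγ 0 = hσ 0) (hinit2 : deriv hγ 0 = deriv hσ 0)
    (hcomp : ∀ θ, kγ θ ≤ kσ θ) :
    (∀ θ, hσ θ ≤ hγ θ) ∧
      ∀ θ φ : ℝ,
        (hσ θ * Real.cos θ - deriv hσ θ * Real.sin θ) * Real.cos φ +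
        (hσ θ * Real.sin θ + deriv hσ θ * Real.cos θ) * Real.sin φ ≤ hγ φ := by
  have hγ' := fun x => (hγC2.differentiable two_ne_zero x).hasDerivAt
  have hγ'' := fun x => (hγC2.differentiable_deriv_two x).hasDerivAt
  have hσ' := fun x => (hσC2.differentiable two_ne_zero x).hasDerivAt
  have hσ'' := fun x => (hσC2.differentiable_deriv_two x).hasDerivAt
  have hcompare : ∀ θ, hσ θ ≤ hγ θ := fun θ => sub_nonneg.1 <|
    (hγper.sub hσper).nonneg_of_deriv_deriv_add_nonneg (fun x => (hγ' x).sub (hσ' x))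
      (fun x => (hγ'' x).sub (hσ'' x))
      (fun x => by
        have := one_div_le_one_div_of_le (hkγpos x) (hcomp x)
        simp only [Pi.sub_apply]
        linarith [hodeγ x, hodeσ x])
      (a := 0) (sub_eq_zero.2 hinit1) (sub_eq_zero.2 hinit2) θ
  refine ⟨hcompare, fun θ φ => ?_⟩
  have hsupport := hσper.tangent_sinusoid_le_of_deriv_deriv_add_nonneg hσ' hσ''
    (fun x => by rw [hodeσ x]; exact (one_div_pos.2 (hkσpos x)).le) θ φ
  calc _ = hσ θ * cos (φ - θ) + deriv hσ θ * sin (φ - θ) := by rw [cos_sub, sin_sub]; ring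
    _ ≤ hσ φ := hsupport
    _ ≤ hγ φ := hcompare φ
end

section
/- Let γ be a closed, simple, strictly convex C² curve of constant Minkowski width d in a normed plane, parametrized over [0, 2λ(S)] so that γ'(u) = ρ(u)φ'(u), where φ is the double-sector-area parametrization of the unit circle S. Then ρ(u) + ρ(u + λ(S)) = d for all u; i.e., the curvature radii at any pair of opposite points sum to the width. -/
/-! Differentiate the width relation and use `φ' (u + λ) = -φ' u`, which follows from the
antiperiodicity of `φ`; as `φ' u ≠ 0`, the coefficients of `φ' u` on both sides agree. -/

theorem Function.Antiperiodic.eq_neg_of_hasDerivAt {𝕜 E : Type*} [NontriviallyNormedField 𝕜]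
    [NormedAddCommGroup E] [NormedSpace 𝕜 E] {f : 𝕜 → E} {c x : 𝕜} {a b : E}
    (hf : Function.Antiperiodic f c) (ha : HasDerivAt f a x) (hb : HasDerivAt f b (x + c)) :
    b = -a :=
  (hb.comp_add_const x c).unique (hf.funext ▸ ha.neg)

theorem stmt_17_general {X : Type*} [NormedAddCommGroup X] [NormedSpace ℝ X]
    (lamS d : ℝ)
    (φ φd : ℝ → X) (γ : ℝ → X) (ρ : ℝ → ℝ)
    (hφd : ∀ u, HasDerivAt φ (φd u) u)
    (hφdne : ∀ u, φd u ≠ 0)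
    (hanti : ∀ u, φ (u + lamS) = -φ u)
    (hγ : ∀ u, HasDerivAt γ (ρ u • φd u) u)
    (hwidth : ∀ u, γ u - γ (u + lamS) = d • φ u) :
    ∀ u, ρ u + ρ (u + lamS) = d := by
  intro u
  have hφd_anti : φd (u + lamS) = -φd u :=
    Function.Antiperiodic.eq_neg_of_hasDerivAt hanti (hφd u) (hφd (u + lamS))
  have hdiff : ρ u • φd u - ρ (u + lamS) • φd (u + lamS) = d • φd u :=
    ((hγ u).sub ((hγ (u + lamS)).comp_add_const u lamS)).unique
      ((funext hwidth : γ - (fun v => γ (v + lamS)) = d • φ) ▸ (hφd u).const_smul d)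
  rw [hφd_anti, smul_neg, sub_neg_eq_add, ← add_smul] at hdiff
  exact smul_left_injective ℝ (hφdne u) hdiff

/-- For a closed strictly convex C² curve γ of constant Minkowski
width d in a normed plane, parametrized so that γ'(u) = ρ(u)·φ'(u) with φ the
double-sector-area parametrization of the unit circle S (with half-period lamS,
so that φ(u + lamS) = -φ(u)) and with opposite points satisfying
γ(u) − γ(u + lamS) = d·φ(u), the curvature radii at opposite points satisfy
ρ(u) + ρ(u + lamS) = d for all u. -/
theorem stmt_17 {X : Type*} [NormedAddCommGroup X] [NormedSpace ℝ X]
    [StrictConvexSpace ℝ X] (hdim : Module.finrank ℝ X = 2)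
    (lamS d : ℝ) (hlamS : 0 < lamS) (hd : 0 < d)
    (φ φd : ℝ → X) (γ : ℝ → X) (ρ : ℝ → ℝ)
    (hφ : ∀ u, ‖φ u‖ = 1) (hφd : ∀ u, HasDerivAt φ (φd u) u)
    (hφdne : ∀ u, φd u ≠ 0)
    (hanti : ∀ u, φ (u + lamS) = -φ u)
    (hρpos : ∀ u, 0 < ρ u)
    (hγ : ∀ u, HasDerivAt γ (ρ u • φd u) u)
    (hwidth : ∀ u, γ u - γ (u + lamS) = d • φ u) :
    ∀ u, ρ u + ρ (u + lamS) = d :=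
  stmt_17_general lamS d φ φd γ ρ hφd hφdne hanti hγ hwidth
end

section
/- Let γ be a closed, simple, strictly convex curve of constant Minkowski width d in a normed plane. Then the Minkowski length of γ equals d·l(S)/2, where l(S) is the Minkowski length of the unit circle. -/
/-- A closed strictly convex curve γ of constant Minkowski width d
has Minkowski length d·l(S)/2, where l(S) = ∫₀^{2λS} ‖φ'(u)‖ du is the Minkowski
length of the unit circle (φ the double-sector-area parametrization with
half-period λS, φ(u+λS) = -φ(u)); γ is parametrized by γ'(u) = ρ(u)·φ'(u) and
the opposite curvature radii satisfy ρ(u) + ρ(u+λS) = d. Then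
l(γ) = ∫₀^{2λS} ρ(u)‖φ'(u)‖ du = d·l(S)/2. -/
theorem stmt_18 {X : Type*} [NormedAddCommGroup X] [NormedSpace ℝ X]
    [StrictConvexSpace ℝ X] (hdim : Module.finrank ℝ X = 2)
    (lamS d : ℝ) (hlamS : 0 < lamS) (hd : 0 < d)
    (φ φd : ℝ → X) (γ : ℝ → X) (ρ : ℝ → ℝ)
    (hφ : ∀ u, ‖φ u‖ = 1) (hφd : ∀ u, HasDerivAt φ (φd u) u)
    (hφdcont : Continuous φd)
    (hanti : ∀ u, φ (u + lamS) = -φ u)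
    (hρpos : ∀ u, 0 < ρ u) (hρcont : Continuous ρ)
    (hγ : ∀ u, HasDerivAt γ (ρ u • φd u) u)
    (hsum : ∀ u, ρ u + ρ (u + lamS) = d) :
    ∫ u in (0:ℝ)..(2 * lamS), ρ u * ‖φd u‖ =
      d * (∫ u in (0:ℝ)..(2 * lamS), ‖φd u‖) / 2 := by
  -- φd is anti-periodic
  have hφdanti : ∀ u, φd (u + lamS) = -φd u := by
    intro u
    have h1 : HasDerivAt (fun t => φ (t + lamS)) (φd (u + lamS)) u :=
      (hφd (u + lamS)).comp_add_const u lamS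
    have h2 : HasDerivAt (fun t => φ (t + lamS)) (-φd u) u := by
      have : (fun t => φ (t + lamS)) = fun t => -φ t := funext fun t => hanti t
      rw [this]
      exact (hφd u).neg
    exact h1.unique h2
  have hnormanti : ∀ u, ‖φd (u + lamS)‖ = ‖φd u‖ := fun u => by
    rw [hφdanti u, norm_neg]
  -- integrability facts
  have hcontf : Continuous fun u => ρ u * ‖φd u‖ := hρcont.mul hφdcont.norm
  have hcontg : Continuous fun u => ‖φd u‖ := hφdcont.norm
  have key : ∀ f : ℝ → ℝ, Continuous f →
      ∫ u in (0:ℝ)..(2 * lamS), f u =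
        (∫ u in (0:ℝ)..lamS, f u) + ∫ u in (0:ℝ)..lamS, f (u + lamS) := by
    intro f hf
    have h1 : ∫ u in (0:ℝ)..lamS, f (u + lamS) = ∫ u in (0 + lamS : ℝ)..(lamS + lamS), f u :=
      intervalIntegral.integral_comp_add_right f lamS
    rw [h1, zero_add]
    have := intervalIntegral.integral_add_adjacent_intervals
      (μ := MeasureTheory.volume) (a := (0:ℝ)) (b := lamS) (c := lamS + lamS)
      (hf.intervalIntegrable 0 lamS) (hf.intervalIntegrable lamS (lamS + lamS))
    rw [show lamS + lamS = 2 * lamS by ring] at this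
    rw [← this]
    rw [show lamS + lamS = 2 * lamS by ring]
  rw [key _ hcontf, key _ hcontg]
  have hL : ((∫ u in (0:ℝ)..lamS, ρ u * ‖φd u‖) +
      ∫ u in (0:ℝ)..lamS, ρ (u + lamS) * ‖φd (u + lamS)‖) =
      d * ∫ u in (0:ℝ)..lamS, ‖φd u‖ := by
    have e1 : ∫ u in (0:ℝ)..lamS, ρ (u + lamS) * ‖φd (u + lamS)‖ =
        ∫ u in (0:ℝ)..lamS, ρ (u + lamS) * ‖φd u‖ := by
      congr 1; funext u; rw [hnormanti u]
    have h2cont : Continuous fun u => ρ (u + lamS) * ‖φd u‖ :=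
      (hρcont.comp (continuous_id.add continuous_const)).mul hφdcont.norm
    rw [e1, ← intervalIntegral.integral_add (hcontf.intervalIntegrable 0 lamS)
      (h2cont.intervalIntegrable 0 lamS), ← intervalIntegral.integral_const_mul]
    congr 1; funext u
    rw [← hsum u]; ring
  rw [hL]
  have e2 : ∫ u in (0:ℝ)..lamS, ‖φd (u + lamS)‖ = ∫ u in (0:ℝ)..lamS, ‖φd u‖ := by
    congr 1; funext u; rw [hnormanti u]
  rw [e2]; ring
end

section
/- Let γ : [0,c] → X be a C² curve parametrized by arc length in a smooth strictly convex normed plane, with arc-length unit circle parametrization φ and tangent function t(s) defined by γ'(s) = φ'(t(s)). Suppose η is a curve such that γ is the envelope of the left-normal lines of η, meaning γ'(s) ⊣_B η'(s) and η(s) − γ(s) is parallel to φ(u(s)) where γ'(s) = φ(u(s)). Then there exists a constant c₀ ∈ ℝ such that η(s) = γ(s) + (c₀ − s)·φ(u(s)) for all s; i.e., every involute of γ is a string involute. -/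
/-!
Hahn–Banach in the quotient by `ℝ ∙ η'(s)` turns the Birkhoff orthogonality `φ(u s) ⊣ η'(s)` into
a functional `g` of norm at most one with `g (φ (u s)) = 1` and `g (η' s) = 0`. As `g ∘ φ ≤ 1`
attains its maximum at `u s`, `g` also kills the tangent `φ'(u s)`. Since
`η' = (1 + f') • φ ∘ u + (f * u') • φ' ∘ u`, this forces `f' = -1`, so `f s + s` is constant.
-/

section

variable {E : Type*} [NormedAddCommGroup E] [NormedSpace ℝ E]

theorem exists_dual_vector_of_birkhoffOrthogonal {x v : E} (h : ∀ t : ℝ, ‖x‖ ≤ ‖x + t • v‖) :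
    ∃ g : StrongDual ℝ E, ‖g‖ ≤ 1 ∧ g x = ‖x‖ ∧ g v = 0 := by
  set S : Submodule ℝ E := ℝ ∙ v
  have hnorm : ‖(Submodule.Quotient.mk x : E ⧸ S)‖ = ‖x‖ := by
    refine le_antisymm (Submodule.Quotient.norm_mk_le S x) (QuotientAddGroup.le_norm_iff.mpr ?_)
    intro y hy
    obtain ⟨t, ht⟩ := Submodule.mem_span_singleton.mp ((Submodule.Quotient.eq S).mp hy)
    rw [show y = x + t • v by rw [ht, add_sub_cancel]]
    exact h t
  obtain ⟨g₀, hg₀, hg₀x⟩ := exists_dual_vector'' ℝ (Submodule.Quotient.mk x : E ⧸ S)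
  refine ⟨g₀.comp S.mkQL, ?_, by simpa [hnorm] using hg₀x, ?_⟩
  · refine ContinuousLinearMap.opNorm_le_bound _ zero_le_one fun y => ?_
    calc ‖g₀ (S.mkQL y)‖ ≤ ‖g₀‖ * ‖S.mkQ y‖ := g₀.le_opNorm _
      _ ≤ 1 * ‖y‖ := by gcongr; exact Submodule.Quotient.norm_mk_le S y
  · simp [S, (Submodule.Quotient.mk_eq_zero S).mpr (Submodule.mem_span_singleton_self v)]

theorem IsLocalMax.dual_vector_apply_deriv_eq_zero {φ : ℝ → E} {φ' : E} {v₀ : ℝ}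
    (hmax : IsLocalMax (‖φ ·‖) v₀)
    (hφ : HasDerivAt φ φ' v₀) {g : StrongDual ℝ E} (hg : ‖g‖ ≤ 1) (hgφ : g (φ v₀) = ‖φ v₀‖) :
    g φ' = 0 := by
  have hgφ' : HasDerivAt (g ∘ φ) (g φ') v₀ :=
    (g : E →L[ℝ] ℝ).hasFDerivAt.comp_hasDerivAt v₀ hφ
  refine IsLocalMax.hasDerivAt_eq_zero ?_ hgφ'
  filter_upwards [hmax] with v hv
  calc g (φ v) ≤ ‖g (φ v)‖ := Real.le_norm_self _
    _ ≤ ‖g‖ * ‖φ v‖ := g.le_opNorm _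
    _ ≤ 1 * ‖φ v₀‖ := by gcongr
    _ = g (φ v₀) := by rw [one_mul, hgφ]

theorem IsLocalMax.eq_zero_of_birkhoffOrthogonal {φ : ℝ → E} {φ' : E} {v₀ : ℝ}
    (hmax : IsLocalMax (‖φ ·‖) v₀)
    (hφ : HasDerivAt φ φ' v₀) (hφ₀ : φ v₀ ≠ 0) {a b : ℝ}
    (h : ∀ t : ℝ, ‖φ v₀‖ ≤ ‖φ v₀ + t • (a • φ v₀ + b • φ')‖) : a = 0 := by
  obtain ⟨g, hg, hgφ, hg_orth⟩ := exists_dual_vector_of_birkhoffOrthogonal h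
  have hgφ' : g φ' = 0 := hmax.dual_vector_apply_deriv_eq_zero hφ hg hgφ
  simpa [hgφ, hgφ', hφ₀] using hg_orth

theorem deriv_eq_neg_one_of_birkhoffOrthogonal {φ φd : ℝ → E} (hφ : ∀ v, ‖φ v‖ = 1)
    (hφd : ∀ v, HasDerivAt φ (φd v) v)
    {γ : ℝ → E} {u f : ℝ → ℝ} {s : ℝ} {ηd : E} (hu : DifferentiableAt ℝ u s)
    (hf : DifferentiableAt ℝ f s) (hγ : HasDerivAt γ (φ (u s)) s)
    (hη : HasDerivAt (fun t => γ t + f t • φ (u t)) ηd s)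
    (hB : ∀ t : ℝ, ‖φ (u s)‖ ≤ ‖φ (u s) + t • ηd‖) : deriv f s = -1 := by
  have hφu : HasDerivAt (fun t => φ (u t)) (deriv u s • φd (u s)) s :=
    (hφd (u s)).scomp s hu.hasDerivAt
  have hηd : ηd = (1 + deriv f s) • φ (u s) + (f s * deriv u s) • φd (u s) := by
    rw [hη.unique (hγ.add (hf.hasDerivAt.smul hφu))]
    module
  have hmax : IsLocalMax (‖φ ·‖) (u s) := by simpa [hφ] using isLocalMax_const
  have hφ₀ : φ (u s) ≠ 0 := norm_ne_zero_iff.mp (by simp [hφ])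
  have := hmax.eq_zero_of_birkhoffOrthogonal (hφd (u s)) hφ₀ (hηd ▸ hB)
  linarith

end

theorem stmt_19_general {X : Type*} [NormedAddCommGroup X] [NormedSpace ℝ X]
    (φ φd : ℝ → X)
    (hφ : ∀ v, ‖φ v‖ = 1) (hφd : ∀ v, HasDerivAt φ (φd v) v)
    (γ η : ℝ → X) (u : ℝ → ℝ) (ηd : ℝ → X) (f : ℝ → ℝ)
    (hu : Differentiable ℝ u)
    (hγ : ∀ s, HasDerivAt γ (φ (u s)) s)
    (hη : ∀ s, HasDerivAt η (ηd s) s)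
    (hBirkhoff : ∀ s, ∀ t : ℝ, ‖φ (u s)‖ ≤ ‖φ (u s) + t • ηd s‖)
    (hf : Differentiable ℝ f)
    (hparallel : ∀ s, η s = γ s + f s • φ (u s)) :
    ∃ c₀ : ℝ, ∀ s, η s = γ s + (c₀ - s) • φ (u s) := by
  have hη_eq : η = fun t => γ t + f t • φ (u t) := funext hparallel
  have hf' (s : ℝ) : deriv f s = -1 :=
    deriv_eq_neg_one_of_birkhoffOrthogonal hφ hφd (hu s) (hf s) (hγ s) (hη_eq ▸ hη s)
      (hBirkhoff s)
  have hconst (s : ℝ) : f s + s = f 0 + 0 :=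
    is_const_of_deriv_eq_zero (hf.add differentiable_id)
      (fun t => by simp [deriv_add (hf t) differentiableAt_id, hf' t]) s 0
  refine ⟨f 0, fun s => ?_⟩
  rw [hparallel s, show f s = f 0 - s by linarith [hconst s]]

/-- Every involute is a string involute. Let γ be an arc-length
parametrized curve in a smooth strictly convex normed plane, φ an arc-length
parametrization of the unit circle, u(s) with γ'(s) = φ(u(s)). If η is a curve
such that γ is the envelope of the left-normal lines of η — i.e.
γ'(s) ⊣_B η'(s) and η(s) − γ(s) is parallel to φ(u(s)), say
η(s) = γ(s) + f(s)·φ(u(s)) — then there is a constant c₀ with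
η(s) = γ(s) + (c₀ − s)·φ(u(s)) for all s. -/
theorem stmt_19 {X : Type*} [NormedAddCommGroup X] [NormedSpace ℝ X]
    [StrictConvexSpace ℝ X] (hdim : Module.finrank ℝ X = 2)
    (φ φd : ℝ → X)
    (hφ : ∀ v, ‖φ v‖ = 1) (hφd : ∀ v, HasDerivAt φ (φd v) v)
    (hφarc : ∀ v, ‖φd v‖ = 1)
    (γ η : ℝ → X) (u : ℝ → ℝ) (ηd : ℝ → X) (f : ℝ → ℝ)
    (hu : Differentiable ℝ u)
    (hγ : ∀ s, HasDerivAt γ (φ (u s)) s)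
    (hη : ∀ s, HasDerivAt η (ηd s) s)
    (hBirkhoff : ∀ s, ∀ t : ℝ, ‖φ (u s)‖ ≤ ‖φ (u s) + t • ηd s‖)
    (hf : Differentiable ℝ f)
    (hparallel : ∀ s, η s = γ s + f s • φ (u s)) :
    ∃ c₀ : ℝ, ∀ s, η s = γ s + (c₀ - s) • φ (u s) :=
  stmt_19_general φ φd hφ hφd γ η u ηd f hu hγ hη hBirkhoff hf hparallel
end
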